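/- Let ν₁ and ν₂ be twice-differentiable complex-valued functions on an open interval satisfying the second-order linear ODE a₂ y'' + a₁ y' + a₀ y = 0, where a₀, a₁, a₂ are differentiable functions with a₂ nonvanishing. Then the product ω = ν₁ν₂ satisfies the third-order ODE a₂² ω''' + 3a₁a₂ ω'' + (4a₀a₂ + 2a₁² + a₂a₁' − a₁a₂') ω' + (4a₀a₁ + 2a₀'a₂ − 2a₀a₂') ω = 0. -/
import Mathlib


theorem aux_symmsq (A A' B B' p q r p' q' r' : ℂ) (hr : r ≠ 0) :
    r ^ 2 *
        ((-(q' * A' + q * (-(q * A' + p * A) / r) + (p' * A + p * A')) * r -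
              -(q * A' + p * A) * r') / r ^ 2 * B +
          -(q * A' + p * A) / r * B' +
          2 * (-(q * A' + p * A) / r * B' + A' * (-(q * B' + p * B) / r)) +
          (A' * (-(q * B' + p * B) / r) +
            A * ((-(q' * B' + q * (-(q * B' + p * B) / r) + (p' * B + p * B')) * r -
                -(q * B' + p * B) * r') / r ^ 2))) +
      3 * q * r *
        (-(q * A' + p * A) / r * B + 2 * (A' * B') + A * (-(q * B' + p * B) / r)) +
      (4 * p * r + 2 * q ^ 2 + r * q' - q * r') * (A' * B + A * B') +
      (4 * p * q + 2 * p' * r - 2 * p * r') * (A * B) = 0 := by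
  have hD : (r ^ 2 * r * r * (r * r ^ 2) : ℂ) ≠ 0 := by
    exact mul_ne_zero (mul_ne_zero (mul_ne_zero (pow_ne_zero _ hr) hr) hr)
      (mul_ne_zero hr (pow_ne_zero _ hr))
  field_simp
  ring

/-- If `ν₁` and `ν₂` are twice-differentiable solutions of the second-order
linear ODE `a₂ y'' + a₁ y' + a₀ y = 0` on an open interval, with `a₀, a₁, a₂`
differentiable and `a₂` nonvanishing, then `ω = ν₁ν₂` satisfies the symmetric
square equation
`a₂² ω''' + 3a₁a₂ ω'' + (4a₀a₂ + 2a₁² + a₂a₁' − a₁a₂') ω' +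
  (4a₀a₁ + 2a₀'a₂ − 2a₀a₂') ω = 0`. -/
theorem symmetric_square_of_second_order_ODE
    (x y : ℝ) (hxy : x < y)
    (ν₁ ν₂ a₀ a₁ a₂ : ℝ → ℂ)
    (hν₁ : ∀ t ∈ Set.Ioo x y, DifferentiableAt ℝ ν₁ t)
    (hν₁' : ∀ t ∈ Set.Ioo x y, DifferentiableAt ℝ (deriv ν₁) t)
    (hν₂ : ∀ t ∈ Set.Ioo x y, DifferentiableAt ℝ ν₂ t)
    (hν₂' : ∀ t ∈ Set.Ioo x y, DifferentiableAt ℝ (deriv ν₂) t)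
    (ha₀ : ∀ t ∈ Set.Ioo x y, DifferentiableAt ℝ a₀ t)
    (ha₁ : ∀ t ∈ Set.Ioo x y, DifferentiableAt ℝ a₁ t)
    (ha₂ : ∀ t ∈ Set.Ioo x y, DifferentiableAt ℝ a₂ t)
    (ha₂0 : ∀ t ∈ Set.Ioo x y, a₂ t ≠ 0)
    (hode₁ : ∀ t ∈ Set.Ioo x y,
      a₂ t * deriv (deriv ν₁) t + a₁ t * deriv ν₁ t + a₀ t * ν₁ t = 0)
    (hode₂ : ∀ t ∈ Set.Ioo x y,
      a₂ t * deriv (deriv ν₂) t + a₁ t * deriv ν₂ t + a₀ t * ν₂ t = 0)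
    (ω : ℝ → ℂ) (hω : ω = fun t => ν₁ t * ν₂ t) :
    ∀ t ∈ Set.Ioo x y,
      (a₂ t) ^ 2 * deriv (deriv (deriv ω)) t
        + 3 * a₁ t * a₂ t * deriv (deriv ω) t
        + (4 * a₀ t * a₂ t + 2 * (a₁ t) ^ 2 + a₂ t * deriv a₁ t
            - a₁ t * deriv a₂ t) * deriv ω t
        + (4 * a₀ t * a₁ t + 2 * deriv a₀ t * a₂ t - 2 * a₀ t * deriv a₂ t) * ω t
      = 0 := by
  intro t ht
  -- first derivative of ω on the interval
  have hg : ∀ s ∈ Set.Ioo x y,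
      deriv ω s = deriv ν₁ s * ν₂ s + ν₁ s * deriv ν₂ s := by
    intro s hs
    rw [hω]
    exact deriv_mul (hν₁ s hs) (hν₂ s hs)
  -- ODE rewrites
  have hODE₁ : ∀ s ∈ Set.Ioo x y,
      deriv (deriv ν₁) s = -(a₁ s * deriv ν₁ s + a₀ s * ν₁ s) / a₂ s := by
    intro s hs
    rw [eq_div_iff (ha₂0 s hs)]
    linear_combination hode₁ s hs
  have hODE₂ : ∀ s ∈ Set.Ioo x y,
      deriv (deriv ν₂) s = -(a₁ s * deriv ν₂ s + a₀ s * ν₂ s) / a₂ s := by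
    intro s hs
    rw [eq_div_iff (ha₂0 s hs)]
    linear_combination hode₂ s hs
  -- second derivative of ω on the interval
  have h2 : ∀ s ∈ Set.Ioo x y,
      deriv (deriv ω) s =
        (-(a₁ s * deriv ν₁ s + a₀ s * ν₁ s) / a₂ s) * ν₂ s
          + 2 * (deriv ν₁ s * deriv ν₂ s)
          + ν₁ s * (-(a₁ s * deriv ν₂ s + a₀ s * ν₂ s) / a₂ s) := by
    intro s hs
    have hev : deriv ω =ᶠ[nhds s]
        (fun u => deriv ν₁ u * ν₂ u + ν₁ u * deriv ν₂ u) := by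
      filter_upwards [isOpen_Ioo.mem_nhds hs] with u hu using hg u hu
    have hd : HasDerivAt (fun u => deriv ν₁ u * ν₂ u + ν₁ u * deriv ν₂ u)
        (deriv (deriv ν₁) s * ν₂ s + deriv ν₁ s * deriv ν₂ s
          + (deriv ν₁ s * deriv ν₂ s + ν₁ s * deriv (deriv ν₂) s)) s :=
      (((hν₁' s hs).hasDerivAt.mul (hν₂ s hs).hasDerivAt).add
        ((hν₁ s hs).hasDerivAt.mul (hν₂' s hs).hasDerivAt))
    rw [hev.deriv_eq, hd.deriv, hODE₁ s hs, hODE₂ s hs]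
    ring
  -- abbreviations for derivative values at t
  have hdA : HasDerivAt ν₁ (deriv ν₁ t) t := (hν₁ t ht).hasDerivAt
  have hdA' : HasDerivAt (deriv ν₁) (deriv (deriv ν₁) t) t := (hν₁' t ht).hasDerivAt
  have hdB : HasDerivAt ν₂ (deriv ν₂ t) t := (hν₂ t ht).hasDerivAt
  have hdB' : HasDerivAt (deriv ν₂) (deriv (deriv ν₂) t) t := (hν₂' t ht).hasDerivAt
  have hd0 : HasDerivAt a₀ (deriv a₀ t) t := (ha₀ t ht).hasDerivAt
  have hd1 : HasDerivAt a₁ (deriv a₁ t) t := (ha₁ t ht).hasDerivAt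
  have hd2 : HasDerivAt a₂ (deriv a₂ t) t := (ha₂ t ht).hasDerivAt
  have ha2t : a₂ t ≠ 0 := ha₂0 t ht
  -- third derivative at t
  have hev2 : deriv (deriv ω) =ᶠ[nhds t]
      (fun s => (-(a₁ s * deriv ν₁ s + a₀ s * ν₁ s) / a₂ s) * ν₂ s
        + 2 * (deriv ν₁ s * deriv ν₂ s)
        + ν₁ s * (-(a₁ s * deriv ν₂ s + a₀ s * ν₂ s) / a₂ s)) := by
    filter_upwards [isOpen_Ioo.mem_nhds ht] with u hu using h2 u hu
  have hnum₁ : HasDerivAt (fun s => -(a₁ s * deriv ν₁ s + a₀ s * ν₁ s))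
      (-(deriv a₁ t * deriv ν₁ t + a₁ t * deriv (deriv ν₁) t
        + (deriv a₀ t * ν₁ t + a₀ t * deriv ν₁ t))) t :=
    ((hd1.mul hdA').add (hd0.mul hdA)).neg
  have hnum₂ : HasDerivAt (fun s => -(a₁ s * deriv ν₂ s + a₀ s * ν₂ s))
      (-(deriv a₁ t * deriv ν₂ t + a₁ t * deriv (deriv ν₂) t
        + (deriv a₀ t * ν₂ t + a₀ t * deriv ν₂ t))) t :=
    ((hd1.mul hdB').add (hd0.mul hdB)).neg
  have hd3 : HasDerivAt
      (fun s => (-(a₁ s * deriv ν₁ s + a₀ s * ν₁ s) / a₂ s) * ν₂ s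
        + 2 * (deriv ν₁ s * deriv ν₂ s)
        + ν₁ s * (-(a₁ s * deriv ν₂ s + a₀ s * ν₂ s) / a₂ s))
      (((-(deriv a₁ t * deriv ν₁ t + a₁ t * deriv (deriv ν₁) t
            + (deriv a₀ t * ν₁ t + a₀ t * deriv ν₁ t)) * a₂ t
          - -(a₁ t * deriv ν₁ t + a₀ t * ν₁ t) * deriv a₂ t) / a₂ t ^ 2) * ν₂ t
        + (-(a₁ t * deriv ν₁ t + a₀ t * ν₁ t) / a₂ t) * deriv ν₂ t
        + 2 * (deriv (deriv ν₁) t * deriv ν₂ t + deriv ν₁ t * deriv (deriv ν₂) t)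
        + (deriv ν₁ t * (-(a₁ t * deriv ν₂ t + a₀ t * ν₂ t) / a₂ t)
          + ν₁ t * ((-(deriv a₁ t * deriv ν₂ t + a₁ t * deriv (deriv ν₂) t
              + (deriv a₀ t * ν₂ t + a₀ t * deriv ν₂ t)) * a₂ t
            - -(a₁ t * deriv ν₂ t + a₀ t * ν₂ t) * deriv a₂ t) / a₂ t ^ 2))) t :=
    ((((hnum₁.div hd2 ha2t).mul hdB).add
        ((hdA'.mul hdB').const_mul 2)).add
      (hdA.mul (hnum₂.div hd2 ha2t)))
  rw [hev2.deriv_eq, hd3.deriv, h2 t ht, hg t ht, hω, hODE₁ t ht, hODE₂ t ht]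
  exact aux_symmsq (ν₁ t) (deriv ν₁ t) (ν₂ t) (deriv ν₂ t) (a₀ t) (a₁ t) (a₂ t)
    (deriv a₀ t) (deriv a₁ t) (deriv a₂ t) ha2t
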